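/- arXiv:math/0609501 — 4 statements merged into one kernel-verified Lean document; each statement's English description precedes it below -/
import Mathlib

section
/- Let (V, μ, α) be a Hom-associative algebra over a field K of characteristic 0, i.e. μ is bilinear, α : V → V is linear, and μ(α(x), μ(y,z)) = μ(μ(x,y), α(z)) for all x,y,z. Define the bracket [x,y] = μ(x,y) − μ(y,x). Then (V, [·,·], α) is a Hom-Lie algebra: the bracket is skew-symmetric and satisfies the Hom-Jacobi identity [α(x),[y,z]] + [α(y),[z,x]] + [α(z),[x,y]] = 0 for all x,y,z ∈ V. -/
section HomAssociator

variable {R V : Type*} [CommSemiring R] [AddCommGroup V] [Module R V]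

def homAssociator (μ : V →ₗ[R] V →ₗ[R] V) (α : V →ₗ[R] V) (x y z : V) : V :=
  μ (μ x y) (α z) - μ (α x) (μ y z)

theorem homAssociator_eq_zero_iff (μ : V →ₗ[R] V →ₗ[R] V) (α : V →ₗ[R] V) (x y z : V) :
    homAssociator μ α x y z = 0 ↔ μ (α x) (μ y z) = μ (μ x y) (α z) :=
  sub_eq_zero.trans eq_comm

theorem commutator_homJacobi_eq_alternating_sum_homAssociator
    (μ : V →ₗ[R] V →ₗ[R] V) (α : V →ₗ[R] V) (x y z : V) :
    (μ (α x) (μ y z - μ z y) - μ (μ y z - μ z y) (α x)) +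
      (μ (α y) (μ z x - μ x z) - μ (μ z x - μ x z) (α y)) +
      (μ (α z) (μ x y - μ y x) - μ (μ x y - μ y x) (α z)) =
    homAssociator μ α x z y + homAssociator μ α y x z + homAssociator μ α z y x -
      (homAssociator μ α x y z + homAssociator μ α y z x + homAssociator μ α z x y) := by
  simp only [homAssociator, map_sub, LinearMap.sub_apply]
  abel

end HomAssociator

theorem stmt_0_general {K V : Type*} [Field K] [AddCommGroup V] [Module K V]
    (μ : V →ₗ[K] V →ₗ[K] V) (α : V →ₗ[K] V)
    (hassoc : ∀ x y z : V, μ (α x) (μ y z) = μ (μ x y) (α z)) :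
    (∀ x y : V, (μ x y - μ y x) = -(μ y x - μ x y)) ∧
    (∀ x y z : V,
      (μ (α x) (μ y z - μ z y) - μ (μ y z - μ z y) (α x)) +
      (μ (α y) (μ z x - μ x z) - μ (μ z x - μ x z) (α y)) +
      (μ (α z) (μ x y - μ y x) - μ (μ x y - μ y x) (α z)) = 0) := by
  have hzero (x y z : V) : homAssociator μ α x y z = 0 :=
    (homAssociator_eq_zero_iff μ α x y z).mpr (hassoc x y z)
  refine ⟨fun x y => (neg_sub _ _).symm, fun x y z => ?_⟩
  rw [commutator_homJacobi_eq_alternating_sum_homAssociator, hzero, hzero, hzero, hzero, hzero,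
    hzero]
  simp only [add_zero, sub_self]

theorem stmt_0 {K V : Type*} [Field K] [CharZero K] [AddCommGroup V] [Module K V]
    (μ : V →ₗ[K] V →ₗ[K] V) (α : V →ₗ[K] V)
    (hassoc : ∀ x y z : V, μ (α x) (μ y z) = μ (μ x y) (α z)) :
    (∀ x y : V, (μ x y - μ y x) = -(μ y x - μ x y)) ∧
    (∀ x y z : V,
      (μ (α x) (μ y z - μ z y) - μ (μ y z - μ z y) (α x)) +
      (μ (α y) (μ z x - μ x z) - μ (μ z x - μ x z) (α y)) +
      (μ (α z) (μ x y - μ y x) - μ (μ x y - μ y x) (α z)) = 0) :=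
  stmt_0_general μ α hassoc
end

section
/- Every skew-symmetric bilinear map [·,·] on a 2-dimensional vector space V, together with any linear map α : V → V, defines a Hom-Lie algebra; that is, the Hom-Jacobi identity [α(x),[y,z]] + [α(y),[z,x]] + [α(z),[x,y]] = 0 holds automatically for all x,y,z ∈ V. -/
/-!
The Hom-Jacobiator `J(x, y, z)` is linear in `z`, invariant under cyclic permutation of its
arguments, and vanishes when `z ∈ span {x, y}`, since skew-symmetry in characteristic zero makes
the bracket alternating. Three vectors of a plane satisfy a nontrivial linear relation; cycling
one with nonzero coefficient into the last slot shows `J(x, y, z) = 0`.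
-/

section CommRing

variable {K V : Type*} [CommRing K] [AddCommGroup V] [Module K V]

def homJacobiator (br : V →ₗ[K] V →ₗ[K] V) (α : V →ₗ[K] V) (x y z : V) : V :=
  br (α x) (br y z) + br (α y) (br z x) + br (α z) (br x y)

variable {br : V →ₗ[K] V →ₗ[K] V} {α : V →ₗ[K] V}

theorem homJacobiator_cycle (x y z : V) :
    homJacobiator br α x y z = homJacobiator br α y z x := by
  unfold homJacobiator
  abel

theorem LinearMap.IsAlt.homJacobiator_smul_add_smul_add_smul (hbr : br.IsAlt) (x y z : V)
    (a b c : K) :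
    homJacobiator br α x y (a • x + b • y + c • z) = c • homJacobiator br α x y z := by
  simp only [homJacobiator, map_add, map_smul, LinearMap.add_apply, LinearMap.smul_apply,
    hbr.self_eq_zero, map_zero, smul_zero, add_zero, ← hbr.neg x y, map_neg]
  module

theorem LinearMap.isAlt_of_forall_eq_neg [IsAddTorsionFree V]
    (hskew : ∀ x y, br x y = -br y x) : br.IsAlt :=
  fun x => self_eq_neg.mp (hskew x x)

end CommRing

section Field

variable {K V : Type*} [Field K] [AddCommGroup V] [Module K V] {br : V →ₗ[K] V →ₗ[K] V} {α : V →ₗ[K] V}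

theorem LinearMap.IsAlt.homJacobiator_eq_zero_of_add_smul_eq_zero (hbr : br.IsAlt) {x y z : V}
    {a b c : K} (hc : c ≠ 0) (h : a • x + b • y + c • z = 0) : homJacobiator br α x y z = 0 := by
  have hJ := hbr.homJacobiator_smul_add_smul_add_smul (α := α) x y z a b c
  rw [h] at hJ
  refine (smul_eq_zero.mp (hJ.symm.trans ?_)).resolve_left hc
  simp [homJacobiator]

theorem LinearMap.IsAlt.homJacobiator_eq_zero_of_not_linearIndependent (hbr : br.IsAlt)
    {x y z : V} (h : ¬LinearIndependent K ![x, y, z]) : homJacobiator br α x y z = 0 := by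
  obtain ⟨g, hsum, i, hi⟩ := Fintype.not_linearIndependent_iff.mp h
  simp only [Fin.sum_univ_three, Matrix.cons_val] at hsum
  fin_cases i
  · rw [homJacobiator_cycle]
    exact hbr.homJacobiator_eq_zero_of_add_smul_eq_zero hi (by rw [← hsum]; abel)
  · rw [← homJacobiator_cycle]
    exact hbr.homJacobiator_eq_zero_of_add_smul_eq_zero hi (by rw [← hsum]; abel)
  · exact hbr.homJacobiator_eq_zero_of_add_smul_eq_zero hi hsum

theorem not_linearIndependent_of_finrank_eq_two (hdim : Module.finrank K V = 2) (x y z : V) :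
    ¬LinearIndependent K ![x, y, z] := by
  have : Module.Finite K V := Module.finite_of_finrank_eq_succ hdim
  intro hli
  simpa [hdim] using hli.fintype_card_le_finrank

end Field

theorem stmt_1 {K V : Type*} [Field K] [CharZero K] [AddCommGroup V] [Module K V]
    (hdim : Module.finrank K V = 2)
    (br : V →ₗ[K] V →ₗ[K] V) (α : V →ₗ[K] V)
    (hskew : ∀ x y : V, br x y = - br y x) :
    ∀ x y z : V, br (α x) (br y z) + br (α y) (br z x) + br (α z) (br x y) = 0 := by
  have : IsAddTorsionFree V := .of_isTorsionFree K V
  intro x y z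
  exact (LinearMap.isAlt_of_forall_eq_neg hskew).homJacobiator_eq_zero_of_not_linearIndependent
    (not_linearIndependent_of_finrank_eq_two hdim x y z)
end

section
/- Let A be an associative K-algebra, w ∈ A an idempotent (w² = w), T ∈ A, a ∈ K, and define the new product x*y = a·(w x w T w y w). Then * is Hom-associative with twisting map α(s) = w s w; that is, α(x)*(y*z) = (x*y)*α(z) for all x,y,z ∈ A. Moreover * is in fact associative: x*(y*z) = (x*y)*z. -/
/-! For an idempotent `w`, the compression `α s = w * s * w` is idempotent, and
`x ⋆ y = a • (α x * T * α y)` only sees `α x` and `α y` while its values are fixed by `α`.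
Hence `α` may be inserted or removed freely in any argument, so Hom-associativity reduces to
associativity, and both bracketings of `x ⋆ y ⋆ z` equal `a² • (α x * T * α y * T * α z)`. -/

section Compression

variable {K A : Type*} [Semigroup A] {w : A}

def compress (w x : A) : A := w * x * w

theorem compress_compress (hw : w * w = w) (x : A) : compress w (compress w x) = compress w x := by
  calc w * (w * x * w) * w = (w * w) * x * (w * w) := by simp only [mul_assoc]
    _ = w * x * w := by rw [hw]

variable [SMul K A]

def compressMul (a : K) (w T x y : A) : A := a • (w * x * w * T * w * y * w)

theorem compressMul_eq (a : K) (T x y : A) :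
    compressMul a w T x y = a • (compress w x * T * compress w y) := by
  simp only [compressMul, compress, mul_assoc]

theorem compressMul_compress_left (hw : w * w = w) (a : K) (T x y : A) :
    compressMul a w T (compress w x) y = compressMul a w T x y := by
  rw [compressMul_eq, compressMul_eq, compress_compress hw]

theorem compressMul_compress_right (hw : w * w = w) (a : K) (T x y : A) :
    compressMul a w T x (compress w y) = compressMul a w T x y := by
  rw [compressMul_eq, compressMul_eq, compress_compress hw]

variable [IsScalarTower K A A] [SMulCommClass K A A]

theorem compress_compressMul (hw : w * w = w) (a : K) (T x y : A) :
    compress w (compressMul a w T x y) = compressMul a w T x y := by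
  have hw' : ∀ t : A, w * (w * t) = w * t := fun t => by rw [← mul_assoc, hw]
  simp only [compress, compressMul, mul_smul_comm, smul_mul_assoc, mul_assoc, hw, hw']

theorem compressMul_assoc (hw : w * w = w) (a : K) (T x y z : A) :
    compressMul a w T x (compressMul a w T y z) = compressMul a w T (compressMul a w T x y) z := by
  rw [compressMul_eq, compressMul_eq (x := compressMul a w T x y), compress_compressMul hw,
    compress_compressMul hw, compressMul_eq, compressMul_eq]
  simp only [mul_smul_comm, smul_mul_assoc, mul_assoc]

theorem compressMul_homAssoc (hw : w * w = w) (a : K) (T x y z : A) :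
    compressMul a w T (compress w x) (compressMul a w T y z) =
      compressMul a w T (compressMul a w T x y) (compress w z) := by
  rw [compressMul_compress_left hw, compressMul_compress_right hw, compressMul_assoc hw]

end Compression

theorem stmt_14 {K A : Type*} [CommRing K] [NonUnitalRing A] [Module K A]
    [IsScalarTower K A A] [SMulCommClass K A A]
    (w T : A) (hw : w * w = w) (a : K)
    (star : A → A → A) (hstar : ∀ x y : A, star x y = a • (w * x * w * T * w * y * w))
    (α : A → A) (hα : ∀ s : A, α s = w * s * w) :
    (∀ x y z : A, star (α x) (star y z) = star (star x y) (α z)) ∧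
    (∀ x y z : A, star x (star y z) = star (star x y) z) := by
  obtain rfl : star = compressMul a w T := funext₂ hstar
  obtain rfl : α = compress w := funext hα
  exact ⟨compressMul_homAssoc hw a T, compressMul_assoc hw a T⟩
end

section
/- Let (V, μ, α) be a G₂-Hom-associative algebra (Hom-Vinberg algebra), i.e. μ(α(x),μ(y,z)) − μ(α(y),μ(x,z)) = μ(μ(x,y),α(z)) − μ(μ(y,x),α(z)) for all x,y,z. Then the commutator bracket [x,y] = μ(x,y) − μ(y,x) satisfies the Hom-Jacobi identity [α(x),[y,z]] + [α(y),[z,x]] + [α(z),[x,y]] = 0, so (V,μ,α) is Hom-Lie admissible. -/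
theorem stmt_19_general {K V : Type*} [Field K] [AddCommGroup V] [Module K V]
    (μ : V →ₗ[K] V →ₗ[K] V) (α : V →ₗ[K] V)
    (hvin : ∀ x y z : V,
      μ (α x) (μ y z) - μ (α y) (μ x z) = μ (μ x y) (α z) - μ (μ y x) (α z)) :
    ∀ x y z : V,
      (μ (α x) (μ y z - μ z y) - μ (μ y z - μ z y) (α x)) +
      (μ (α y) (μ z x - μ x z) - μ (μ z x - μ x z) (α y)) +
      (μ (α z) (μ x y - μ y x) - μ (μ x y - μ y x) (α z)) = 0 := by
  intro x y z
  simp only [map_sub, LinearMap.sub_apply]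
  linear_combination (norm := abel) hvin x y z + hvin y z x + hvin z x y

theorem stmt_19 {K V : Type*} [Field K] [CharZero K] [AddCommGroup V] [Module K V]
    (μ : V →ₗ[K] V →ₗ[K] V) (α : V →ₗ[K] V)
    (hvin : ∀ x y z : V,
      μ (α x) (μ y z) - μ (α y) (μ x z) = μ (μ x y) (α z) - μ (μ y x) (α z)) :
    ∀ x y z : V,
      (μ (α x) (μ y z - μ z y) - μ (μ y z - μ z y) (α x)) +
      (μ (α y) (μ z x - μ x z) - μ (μ z x - μ x z) (α y)) +
      (μ (α z) (μ x y - μ y x) - μ (μ x y - μ y x) (α z)) = 0 :=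
  stmt_19_general μ α hvin
end
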